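/- arXiv:2210.02540 — 5 statements merged into one kernel-verified Lean document; each statement's English description precedes it below -/
import Mathlib

section
/- Let k ≥ 1, let α ∈ (−(k+1)/2, −k/2), and let g : (0,∞)^k → ℝ be measurable with g(c x) = c^α g(x) for all c > 0 and x ∈ (0,∞)^k, and ∫_{(0,∞)^k} |g(y) g(1+y)| dy < ∞. Then for every λ > 0 and t ≥ 0 the function h_t^λ(x) = ∫_0^t g(s·1 − x) · exp(−λ Σ_{i=1}^k (s − x_i)) · 1_{{x_i < s for all i}} ds belongs to L²(ℝ^k). -/
open MeasureTheory Real Set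

/-- The kernel `h_t^λ` of the tempered generalized Hermite process:
`h_t^λ(x) = ∫_0^t g(s·1 − x) · exp(−λ ∑ᵢ (s − xᵢ)) · 1_{xᵢ < s ∀ i} ds`. -/
noncomputable def tghKernel {k : ℕ} (g : (Fin k → ℝ) → ℝ) (lam t : ℝ)
    (x : Fin k → ℝ) : ℝ :=
  ∫ s in Set.Ioc (0 : ℝ) t,
    Set.indicator {s' : ℝ | ∀ i, x i < s'}
      (fun s' => g (fun i => s' - x i) * Real.exp (-lam * ∑ i, (s' - x i))) s

open scoped ENNReal

/-!
Since the exponential factor is at most `1`, `|h_t^λ(x)| ≤ ∫_0^t G(s·1 − x) ds`, where `G` is `|g|`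
on the open orthant and `0` elsewhere. Squaring and applying Tonelli bounds `‖h_t^λ‖₂²` by
`∫∫_{(0,t]²} ∫ G(s·1 − x) G(u·1 − x) dx du ds`. For `s < u` the substitutions `x = s·1 − w` and
`w = (u − s) y` together with the homogeneity of `g` turn the inner integral into
`(u − s)^(2α+k) ∫ G(y) G(1 + y) dy`, and the last integral is finite by hypothesis. Finally
`2α + k > −1`, so `|u − s|^(2α+k)` is integrable over `(0,t]²`.
-/

theorem lintegral_eq_mul_lintegral_comp_smul {E : Type*} [NormedAddCommGroup E]
    [NormedSpace ℝ E] [MeasurableSpace E] [BorelSpace E] [FiniteDimensional ℝ E]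
    (μ : Measure E) [μ.IsAddHaarMeasure] (f : E → ℝ≥0∞) {r : ℝ} (hr : 0 < r) :
    ∫⁻ x, f x ∂μ = ENNReal.ofReal (r ^ Module.finrank ℝ E) * ∫⁻ x, f (r • x) ∂μ := by
  have hpow : 0 < r ^ Module.finrank ℝ E := pow_pos hr _
  have hmap := lintegral_map_equiv f (Homeomorph.smulOfNeZero r hr.ne').toMeasurableEquiv (μ := μ)
  simp only [Homeomorph.toMeasurableEquiv_coe, Homeomorph.smulOfNeZero_apply] at hmap
  rw [← hmap, Measure.map_addHaar_smul μ hr.ne', lintegral_smul_measure, smul_eq_mul, ← mul_assoc,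
    ← ENNReal.ofReal_mul hpow.le, abs_of_pos (inv_pos.2 hpow), mul_inv_cancel₀ hpow.ne',
    ENNReal.ofReal_one, one_mul]

theorem intervalIntegrable_abs_rpow {q : ℝ} (hq : -1 < q) (a b : ℝ) :
    IntervalIntegrable (fun x => |x| ^ q) volume a b := by
  have hpos : ∀ c, 0 ≤ c → IntervalIntegrable (fun x => |x| ^ q) volume 0 c := fun c hc =>
    (intervalIntegral.intervalIntegrable_rpow' hq).congr fun x hx => by
      rw [uIoc_of_le hc] at hx
      rw [abs_of_pos hx.1]
  have hfrom_zero : ∀ c, IntervalIntegrable (fun x => |x| ^ q) volume 0 c := by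
    intro c
    rcases le_total 0 c with hc | hc
    · exact hpos c hc
    · simpa using (IntervalIntegrable.iff_comp_neg enorm_ne_top).1 (hpos (-c) (neg_nonneg.2 hc))
  exact (hfrom_zero a).symm.trans (hfrom_zero b)

theorem lintegral_Ioc_lintegral_Ioc_abs_sub_rpow_lt_top {q : ℝ} (hq : -1 < q) (a b : ℝ) :
    ∫⁻ s in Ioc a b, ∫⁻ u in Ioc a b, ENNReal.ofReal (|u - s| ^ q) < ∞ := by
  set J := uIoc (a - b) (b - a)
  set F : ℝ → ℝ≥0∞ := J.indicator fun v => ENNReal.ofReal (|v| ^ q) with hF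
  have hJ : ∫⁻ v, F v < ∞ := by
    rw [hF, lintegral_indicator measurableSet_uIoc]
    exact ((intervalIntegrable_abs_rpow hq _ _).def').lintegral_lt_top
  have hinner : ∀ s ∈ Ioc a b, ∫⁻ u in Ioc a b, ENNReal.ofReal (|u - s| ^ q) ≤ ∫⁻ v, F v := by
    intro s hs
    calc ∫⁻ u in Ioc a b, ENNReal.ofReal (|u - s| ^ q)
        = ∫⁻ u in Ioc a b, F (u - s) := by
          refine setLIntegral_congr_fun measurableSet_Ioc fun u hu => ?_
          have hsub : u - s ∈ J :=
            mem_uIoc.2 (Or.inl ⟨by linarith [hs.2, hu.1], by linarith [hs.1, hu.2]⟩)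
          rw [hF, indicator_of_mem hsub]
      _ ≤ ∫⁻ u, F (u - s) := setLIntegral_le_lintegral _ _
      _ = ∫⁻ v, F v := lintegral_sub_right_eq_self F s
  calc ∫⁻ s in Ioc a b, ∫⁻ u in Ioc a b, ENNReal.ofReal (|u - s| ^ q)
      ≤ ∫⁻ _ in Ioc a b, ∫⁻ v, F v := setLIntegral_mono measurable_const hinner
    _ < ∞ := by
      rw [setLIntegral_const]
      exact ENNReal.mul_lt_top hJ measure_Ioc_lt_top

theorem lintegral_sq_lintegral_eq {X Y : Type*} [MeasurableSpace X] [MeasurableSpace Y]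
    {μ : Measure X} {ν : Measure Y} [SFinite μ] [SFinite ν] {f : X → Y → ℝ≥0∞}
    (hf : Measurable (Function.uncurry f)) :
    ∫⁻ x, (∫⁻ y, f x y ∂ν) ^ 2 ∂μ = ∫⁻ y, ∫⁻ y', ∫⁻ x, f x y * f x y' ∂μ ∂ν ∂ν := by
  have hfx : ∀ x, Measurable (f x) := fun x => hf.comp measurable_prodMk_left
  have hsq : ∀ x, (∫⁻ y, f x y ∂ν) ^ 2 = ∫⁻ y, ∫⁻ y', f x y * f x y' ∂ν ∂ν := fun x => by
    rw [sq, ← lintegral_mul_const _ (hfx x)]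
    exact lintegral_congr fun y => (lintegral_const_mul _ (hfx x)).symm
  have hprod : Measurable fun p : (X × Y) × Y => f p.1.1 p.1.2 * f p.1.1 p.2 :=
    (hf.comp measurable_fst).mul (hf.comp (measurable_fst.fst.prodMk measurable_snd))
  simp_rw [hsq]
  rw [lintegral_lintegral_swap (hprod.lintegral_prod_right').aemeasurable]
  refine lintegral_congr fun y => lintegral_lintegral_swap ?_
  exact (hprod.comp ((measurable_fst.prodMk measurable_const).prodMk measurable_snd)).aemeasurable

section PosOrthant

variable {ι : Type*}

noncomputable def posOrthantENorm (g : (ι → ℝ) → ℝ) (y : ι → ℝ) : ℝ≥0∞ :=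
  {y : ι → ℝ | ∀ i, 0 < y i}.indicator (fun y => ‖g y‖ₑ) y

def IsPosOrthantHomogeneous (g : (ι → ℝ) → ℝ) (α : ℝ) : Prop :=
  ∀ c : ℝ, 0 < c → ∀ x : ι → ℝ, (∀ i, 0 < x i) → g (c • x) = c ^ α * g x

theorem measurableSet_posOrthant [Countable ι] : MeasurableSet {y : ι → ℝ | ∀ i, 0 < y i} := by
  measurability

variable {g : (ι → ℝ) → ℝ} {y : ι → ℝ}

theorem posOrthantENorm_of_pos (hy : ∀ i, 0 < y i) : posOrthantENorm g y = ‖g y‖ₑ :=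
  indicator_of_mem (s := {y : ι → ℝ | ∀ i, 0 < y i}) hy _

theorem posOrthantENorm_of_not_pos (hy : ¬ ∀ i, 0 < y i) : posOrthantENorm g y = 0 :=
  indicator_of_notMem (s := {y : ι → ℝ | ∀ i, 0 < y i}) hy _

theorem measurable_posOrthantENorm [Countable ι] (hg : Measurable g) :
    Measurable (posOrthantENorm g) :=
  hg.enorm.indicator measurableSet_posOrthant

theorem lintegral_posOrthantENorm_mul_one_add [Fintype ι] :
    ∫⁻ y, posOrthantENorm g y * posOrthantENorm g (1 + y) =
      ∫⁻ y in {y : ι → ℝ | ∀ i, 0 < y i}, ‖g y * g (1 + y)‖ₑ := by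
  rw [← lintegral_indicator measurableSet_posOrthant]
  refine lintegral_congr fun y => ?_
  by_cases hy : ∀ i, 0 < y i
  · have h1y : ∀ i, 0 < (1 + y) i := fun i => by simpa using add_pos one_pos (hy i)
    rw [posOrthantENorm_of_pos hy, posOrthantENorm_of_pos h1y,
      indicator_of_mem (s := {y : ι → ℝ | ∀ i, 0 < y i}) hy, enorm_mul]
  · rw [posOrthantENorm_of_not_pos hy, zero_mul,
      indicator_of_notMem (s := {y : ι → ℝ | ∀ i, 0 < y i}) hy]

variable {α : ℝ}

theorem IsPosOrthantHomogeneous.posOrthantENorm_smul (hg : IsPosOrthantHomogeneous g α) {c : ℝ}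
    (hc : 0 < c) (y : ι → ℝ) :
    posOrthantENorm g (c • y) = ENNReal.ofReal (c ^ α) * posOrthantENorm g y := by
  by_cases hy : ∀ i, 0 < y i
  · have hcy : ∀ i, 0 < (c • y) i := fun i => mul_pos hc (hy i)
    rw [posOrthantENorm_of_pos hcy, posOrthantENorm_of_pos hy, hg c hc y hy, enorm_mul,
      Real.enorm_of_nonneg (rpow_nonneg hc.le α)]
  · have hcy : ¬ ∀ i, 0 < (c • y) i := fun h => hy fun i => pos_of_mul_pos_right (h i) hc.le
    rw [posOrthantENorm_of_not_pos hcy, posOrthantENorm_of_not_pos hy, mul_zero]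

theorem IsPosOrthantHomogeneous.lintegral_posOrthantENorm_mul_smul_one_add [Fintype ι]
    (hg : IsPosOrthantHomogeneous g α) {r : ℝ} (hr : 0 < r) :
    ∫⁻ w, posOrthantENorm g w * posOrthantENorm g (r • 1 + w) =
      ENNReal.ofReal (r ^ (2 * α + Fintype.card ι)) *
        ∫⁻ y, posOrthantENorm g y * posOrthantENorm g (1 + y) := by
  rw [lintegral_eq_mul_lintegral_comp_smul volume _ hr, Module.finrank_fintype_fun_eq_card]
  have hsq : ENNReal.ofReal (r ^ α) * ENNReal.ofReal (r ^ α) = ENNReal.ofReal (r ^ (2 * α)) := by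
    rw [← ENNReal.ofReal_mul (rpow_nonneg hr.le α), ← rpow_add hr, two_mul]
  have hpow : ENNReal.ofReal (r ^ Fintype.card ι) * ENNReal.ofReal (r ^ (2 * α)) =
      ENNReal.ofReal (r ^ (2 * α + Fintype.card ι)) := by
    rw [← ENNReal.ofReal_mul (by positivity), ← rpow_natCast, ← rpow_add hr, add_comm]
  simp_rw [← smul_add, hg.posOrthantENorm_smul hr, mul_mul_mul_comm _ (posOrthantENorm g _), hsq]
  rw [lintegral_const_mul' _ _ ENNReal.ofReal_ne_top, ← mul_assoc, hpow]

theorem IsPosOrthantHomogeneous.lintegral_posOrthantENorm_sub_mul_sub [Fintype ι]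
    (hg : IsPosOrthantHomogeneous g α) {s u : ℝ} (hsu : s ≠ u) :
    ∫⁻ x, posOrthantENorm g (s • 1 - x) * posOrthantENorm g (u • 1 - x) =
      ENNReal.ofReal (|u - s| ^ (2 * α + Fintype.card ι)) *
        ∫⁻ y, posOrthantENorm g y * posOrthantENorm g (1 + y) := by
  wlog h : s < u generalizing s u
  · simp_rw [mul_comm (posOrthantENorm g (s • 1 - _)), abs_sub_comm u s]
    exact this hsu.symm (hsu.lt_or_gt.resolve_left h)
  have hus : ∀ x : ι → ℝ, u • (1 : ι → ℝ) - x = (u - s) • 1 + (s • 1 - x) := fun x => by module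
  simp_rw [hus]
  rw [lintegral_sub_left_eq_self
      (fun w => posOrthantENorm g w * posOrthantENorm g ((u - s) • 1 + w)),
    hg.lintegral_posOrthantENorm_mul_smul_one_add (sub_pos.2 h), abs_of_pos (sub_pos.2 h)]

end PosOrthant

section Kernel

variable {k : ℕ} {g : (Fin k → ℝ) → ℝ} {lam : ℝ}

theorem enorm_kernelIntegrand_le (hlam : 0 ≤ lam) (x : Fin k → ℝ) (s : ℝ) :
    ‖Set.indicator {s' : ℝ | ∀ i, x i < s'}
      (fun s' => g (fun i => s' - x i) * Real.exp (-lam * ∑ i, (s' - x i))) s‖ₑ ≤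
      posOrthantENorm g (s • 1 - x) := by
  have hsx : (fun i => s - x i) = s • 1 - x := by ext i; simp
  by_cases hs : ∀ i, x i < s
  · rw [indicator_of_mem (s := {s' : ℝ | ∀ i, x i < s'}) hs, hsx,
      posOrthantENorm_of_pos (by simpa [← hsx] using hs), enorm_mul]
    refine mul_le_of_le_one_right' ?_
    rw [Real.enorm_of_nonneg (exp_nonneg _), ENNReal.ofReal_le_one, exp_le_one_iff]
    exact mul_nonpos_of_nonpos_of_nonneg (neg_nonpos.2 hlam)
      (Finset.sum_nonneg fun i _ => by simpa using (hs i).le)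
  · rw [indicator_of_notMem (s := {s' : ℝ | ∀ i, x i < s'}) hs, enorm_zero]
    exact zero_le

theorem enorm_tghKernel_le (hlam : 0 ≤ lam) (t : ℝ) (x : Fin k → ℝ) :
    ‖tghKernel g lam t x‖ₑ ≤ ∫⁻ s in Ioc 0 t, posOrthantENorm g (s • 1 - x) :=
  (enorm_integral_le_lintegral_enorm _).trans
    (lintegral_mono fun s => enorm_kernelIntegrand_le hlam x s)

theorem aestronglyMeasurable_tghKernel (hg : Measurable g) (lam t : ℝ) :
    AEStronglyMeasurable (tghKernel g lam t) volume := by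
  have hF : Measurable fun p : (Fin k → ℝ) × ℝ => Set.indicator {s' : ℝ | ∀ i, p.1 i < s'}
      (fun s' => g (fun i => s' - p.1 i) * Real.exp (-lam * ∑ i, (s' - p.1 i))) p.2 := by
    have hset : MeasurableSet {p : (Fin k → ℝ) × ℝ | ∀ i, p.1 i < p.2} := by measurability
    simp only [indicator_apply, mem_ofPred_eq]
    exact Measurable.ite hset (by fun_prop) measurable_const
  exact hF.stronglyMeasurable.integral_prod_right'.aestronglyMeasurable

end Kernel

theorem stmt0_general {k : ℕ} (α : ℝ)
    (hα₁ : -((k : ℝ) + 1) / 2 < α)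
    (g : (Fin k → ℝ) → ℝ) (hg : Measurable g)
    (hhom : ∀ c : ℝ, 0 < c → ∀ x : Fin k → ℝ, (∀ i, 0 < x i) →
      g (c • x) = c ^ α * g x)
    (hint : IntegrableOn (fun y : Fin k → ℝ => |g y * g (fun i => 1 + y i)|)
      {y : Fin k → ℝ | ∀ i, 0 < y i})
    (lam : ℝ) (hlam : 0 < lam) (t : ℝ) :
    MemLp (tghKernel g lam t) 2 (volume : Measure (Fin k → ℝ)) := by
  set N := posOrthantENorm g
  set q := 2 * α + Fintype.card (Fin k)
  have hq : -1 < q := by simp only [q, Fintype.card_fin]; linarith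
  have hM : ∫⁻ y, N y * N (1 + y) < ∞ := by
    rw [lintegral_posOrthantENorm_mul_one_add]
    exact (hasFiniteIntegral_iff_enorm.1 hint.2).trans_eq' (lintegral_congr fun y => enorm_abs _)
  have hN : Measurable fun p : (Fin k → ℝ) × ℝ => N (p.2 • 1 - p.1) :=
    (measurable_posOrthantENorm hg).comp (by fun_prop)
  refine ⟨aestronglyMeasurable_tghKernel hg lam t, ?_⟩
  rw [eLpNorm_lt_top_iff_lintegral_rpow_enorm_lt_top two_ne_zero ENNReal.ofNat_ne_top]
  simp only [ENNReal.toReal_ofNat, ENNReal.rpow_two]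
  calc ∫⁻ x, ‖tghKernel g lam t x‖ₑ ^ 2
      ≤ ∫⁻ x, (∫⁻ s in Ioc 0 t, N (s • 1 - x)) ^ 2 :=
        lintegral_mono fun x => pow_le_pow_left' (enorm_tghKernel_le hlam.le t x) 2
    _ = ∫⁻ s in Ioc 0 t, ∫⁻ u in Ioc 0 t, ∫⁻ x, N (s • 1 - x) * N (u • 1 - x) :=
        lintegral_sq_lintegral_eq (f := fun x s => N (s • 1 - x)) hN
    _ ≤ ∫⁻ s in Ioc 0 t, ∫⁻ u in Ioc 0 t, ENNReal.ofReal (|u - s| ^ q) * ∫⁻ y, N y * N (1 + y) :=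
        lintegral_mono fun s => lintegral_mono_ae <|
          (ae_restrict_of_ae (Measure.ae_ne volume s)).mono fun u hu =>
            (IsPosOrthantHomogeneous.lintegral_posOrthantENorm_sub_mul_sub hhom hu.symm).le
    _ = (∫⁻ s in Ioc 0 t, ∫⁻ u in Ioc 0 t, ENNReal.ofReal (|u - s| ^ q)) *
          ∫⁻ y, N y * N (1 + y) := by
        simp_rw [lintegral_mul_const' _ _ hM.ne]
    _ < ∞ := ENNReal.mul_lt_top (lintegral_Ioc_lintegral_Ioc_abs_sub_rpow_lt_top hq 0 t) hM

theorem stmt0 {k : ℕ} (hk : 1 ≤ k) (α : ℝ)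
    (hα₁ : -((k : ℝ) + 1) / 2 < α) (hα₂ : α < -(k : ℝ) / 2)
    (g : (Fin k → ℝ) → ℝ) (hg : Measurable g)
    (hhom : ∀ c : ℝ, 0 < c → ∀ x : Fin k → ℝ, (∀ i, 0 < x i) →
      g (c • x) = c ^ α * g x)
    (hint : IntegrableOn (fun y : Fin k → ℝ => |g y * g (fun i => 1 + y i)|)
      {y : Fin k → ℝ | ∀ i, 0 < y i})
    (lam : ℝ) (hlam : 0 < lam) (t : ℝ) (ht : 0 ≤ t) :
    MemLp (tghKernel g lam t) 2 (volume : Measure (Fin k → ℝ)) :=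
  stmt0_general α hα₁ g hg hhom hint lam hlam t
end

section
/- Let k ≥ 1, α ∈ ℝ, and let g : (0,∞)^k → ℝ be measurable with g(c y) = c^α g(y) for all c > 0 and y ∈ (0,∞)^k. Then for every λ > 0, c > 0, t ≥ 0 and x ∈ ℝ^k, h_{ct}^λ(c x) = c^{α+1} · h_t^{cλ}(x). -/
open MeasureTheory Real Set

theorem stmt4 {k : ℕ} (hk : 1 ≤ k) (α : ℝ)
    (g : (Fin k → ℝ) → ℝ) (hg : Measurable g)
    (hhom : ∀ c : ℝ, 0 < c → ∀ y : Fin k → ℝ, (∀ i, 0 < y i) →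
      g (c • y) = c ^ α * g y)
    (lam c t : ℝ) (hlam : 0 < lam) (hc : 0 < c) (ht : 0 ≤ t) (x : Fin k → ℝ) :
    tghKernel g lam (c * t) (c • x) = c ^ (α + 1) * tghKernel g (c * lam) t x := by
  have hct : 0 ≤ c * t := mul_nonneg hc.le ht
  unfold tghKernel
  rw [← intervalIntegral.integral_of_le hct, ← intervalIntegral.integral_of_le ht]
  set F : ℝ → ℝ := Set.indicator {s' : ℝ | ∀ i, (c • x) i < s'}
      (fun s' => g (fun i => s' - (c • x) i) * Real.exp (-lam * ∑ i, (s' - (c • x) i))) with hF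
  set G : ℝ → ℝ := Set.indicator {s' : ℝ | ∀ i, x i < s'}
      (fun s' => g (fun i => s' - x i) * Real.exp (-(c * lam) * ∑ i, (s' - x i))) with hG
  have key : ∀ u : ℝ, F (c * u) = c ^ α * G u := by
    intro u
    by_cases h : ∀ i, x i < u
    · have h' : (∀ i, (c • x) i < c * u) := fun i => by
        simpa [Pi.smul_apply, smul_eq_mul] using mul_lt_mul_of_pos_left (h i) hc
      simp only [hF, hG, Set.indicator, Set.mem_setOf_eq, if_pos h', if_pos h]
      have hgy : g (fun i => c * u - (c • x) i) = c ^ α * g (fun i => u - x i) := by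
        have := hhom c hc (fun i => u - x i) (fun i => sub_pos.2 (h i))
        have he : (c • fun i => u - x i) = fun i => c * u - (c • x) i := by
          funext i; simp [smul_eq_mul, mul_sub]
        rw [he] at this; exact this
      have hs : ∑ i, (c * u - (c • x) i) = c * ∑ i, (u - x i) := by
        rw [Finset.mul_sum]
        refine Finset.sum_congr rfl fun i _ => ?_
        simp only [Pi.smul_apply, smul_eq_mul]; ring
      rw [hgy, hs]
      have : -lam * (c * ∑ i, (u - x i)) = -(c * lam) * ∑ i, (u - x i) := by ring
      rw [this]; ring
    · have h' : ¬ (∀ i, (c • x) i < c * u) := fun hm =>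
        h fun i => by
          have := hm i
          simp only [Pi.smul_apply, smul_eq_mul] at this
          exact (mul_lt_mul_iff_right₀ hc).mp this
      simp only [hF, hG, Set.indicator, Set.mem_setOf_eq, if_neg h', if_neg h, mul_zero]
  have h1 : (c • ∫ u in (0:ℝ)..t, F (c * u)) = ∫ s in (c*0:ℝ)..(c*t), F s :=
    intervalIntegral.smul_integral_comp_mul_left F c
  rw [mul_zero] at h1
  rw [← h1]
  simp only [key]
  rw [intervalIntegral.integral_const_mul, smul_eq_mul,
    Real.rpow_add_one hc.ne' α]
  ring
end

section
/- Let k ≥ 1, a ∈ (−1/2 − 1/(2k), −1/2), and let g₀ : (0,∞) → ℝ be measurable with g₀(c y) = c^a g₀(y) for all c > 0, ∫_0^∞ |g₀(y) g₀(1+y)| dy < ∞, and define g(x_1,…,x_k) = ∏_{i=1}^k g₀(x_i). Then for every λ > 0 and s, t ≥ 0, ∫_{ℝ^k} h_t^λ(x) h_s^λ(x) dx = ∫_0^t ∫_0^s e^{−λ k |u−v|} · |u−v|^{k(2a+1)} · ( ∫_0^∞ g₀(y) g₀(1+y) e^{−2λ|u−v| y} dy )^k du dv, with absolute convergence. -/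
open MeasureTheory Real Set

/-- The kernel `h_t^λ` of the tempered generalized Hermite process with
product kernel `g(x₁,…,x_k) = ∏ᵢ g₀(xᵢ)`. -/
noncomputable def tghProdKernel (k : ℕ) (g₀ : ℝ → ℝ) (lam t : ℝ)
    (x : Fin k → ℝ) : ℝ :=
  ∫ s in Set.Ioc (0 : ℝ) t,
    Set.indicator {s' : ℝ | ∀ i, x i < s'}
      (fun s' => ∏ i, (g₀ (s' - x i) * Real.exp (-lam * (s' - x i)))) s


/-!
Write `K(u, x) = 1_{x < u} g₀(u - x) e^{-λ(u - x)}`, so that `h_t^λ(x) = ∫_0^t ∏ᵢ K(u, xᵢ) du`.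
By Fubini the left side is `∫_0^t ∫_0^s (∫_ℝ K(u, w) K(v, w) dw)^k dv du`. The substitution
`w = min(u, v) - |u - v| y` and the homogeneity of `g₀` turn the inner integral into
`e^{-λ|u-v|} |u - v|^{2a+1} ∫_0^∞ g₀(y) g₀(1 + y) e^{-2λ|u-v| y} dy`. The same computation for
`|g₀|` bounds the absolute integrand by `C |u - v|^{k(2a+1)}`, which is integrable on the rectangle
since `k(2a+1) > -1`; this justifies Fubini.
-/

section changeOfVariables

variable {E : Type*} [NormedAddCommGroup E]

theorem integrable_comp_sub_mul_iff (f : ℝ → E) {r : ℝ} (hr : r ≠ 0) (v : ℝ) :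
    Integrable (fun y => f (v - r * y)) ↔ Integrable f :=
  (integrable_comp_mul_left_iff (fun z => f (v - z)) hr).trans (integrable_comp_sub_left f v)

theorem integral_eq_smul_integral_comp_sub_mul [NormedSpace ℝ E] (f : ℝ → E) {r : ℝ}
    (hr : 0 < r) (v : ℝ) :
    ∫ x, f x = r • ∫ y, f (v - r * y) := by
  rw [Measure.integral_comp_mul_left (fun z => f (v - z)) r, integral_sub_left_eq_self,
    abs_of_pos (inv_pos.2 hr), smul_inv_smul₀ hr.ne']

end changeOfVariables

theorem ae_fst_ne_snd {α : Type*} [MeasurableSpace α] [MeasurableEq α]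
    (μ ν : Measure α) [SFinite ν] [NullSingletonClass ν] :
    ∀ᵐ p ∂μ.prod ν, p.1 ≠ p.2 :=
  (Measure.ae_prod_iff_ae_ae measurableSet_diagonal.compl).2
    (ae_of_all _ fun u => (ν.ae_ne u).mono fun _ h => Ne.symm h)

/-- On the rectangle the integrand equals `1_{(0,s]}(v) · 1_{[-s,t]}(u - v) |u - v|^β`, a
convolution integrand of two integrable functions. -/
theorem integrable_abs_sub_rpow_prod {β : ℝ} (hβ : -1 < β) (s t : ℝ) :
    Integrable (fun p : ℝ × ℝ => |p.1 - p.2| ^ β)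
      ((volume.restrict (Ioc 0 t)).prod (volume.restrict (Ioc 0 s))) := by
  have hloc : LocallyIntegrable (fun w : ℝ => |w| ^ β) :=
    locallyIntegrable_of_norm_le_rpow (α := -β) (C := 1) (by simp) (by simp; linarith)
      (ae_of_all _ fun w => by
        rw [norm_of_nonneg (rpow_nonneg (abs_nonneg w) β), neg_neg, one_mul, norm_eq_abs])
      (continuous_abs.measurable.pow_const β).aestronglyMeasurable
  have hg : Integrable ((Icc (-s) t).indicator fun w => |w| ^ β) :=
    (integrable_indicator_iff measurableSet_Icc).2 (hloc.integrableOn_isCompact isCompact_Icc)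
  have hf : Integrable ((Ioc 0 s).indicator fun _ => (1 : ℝ)) :=
    (integrable_indicator_iff measurableSet_Ioc).2 (integrableOn_const measure_Ioc_lt_top.ne)
  have hconv := hf.convolution_integrand (ContinuousLinearMap.mul ℝ ℝ) hg
  rw [Measure.prod_restrict]
  refine (hconv.restrict (s := Ioc 0 t ×ˢ Ioc 0 s)).congr ?_
  filter_upwards [ae_restrict_mem (measurableSet_Ioc.prod measurableSet_Ioc)] with p hp
  obtain ⟨⟨hu₀, hut⟩, hv₀, hvs⟩ := hp
  rw [ContinuousLinearMap.mul_apply', indicator_of_mem (show p.2 ∈ Ioc 0 s from ⟨hv₀, hvs⟩),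
    indicator_of_mem (show p.1 - p.2 ∈ Icc (-s) t from ⟨by linarith, by linarith⟩), one_mul]

def IsPosHomogeneous (a : ℝ) (g₀ : ℝ → ℝ) : Prop :=
  ∀ c : ℝ, 0 < c → ∀ y : ℝ, 0 < y → g₀ (c * y) = c ^ a * g₀ y

theorem IsPosHomogeneous.abs {a : ℝ} {g₀ : ℝ → ℝ} (hhom : IsPosHomogeneous a g₀) :
    IsPosHomogeneous a fun y => |g₀ y| :=
  fun c hc y hy => by
    show |g₀ (c * y)| = c ^ a * |g₀ y|
    rw [hhom c hc y hy, abs_mul, abs_of_pos (rpow_pos_of_pos hc a)]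

noncomputable def temperedKernel (g₀ : ℝ → ℝ) (lam u x : ℝ) : ℝ :=
  if x < u then g₀ (u - x) * exp (-lam * (u - x)) else 0

noncomputable def temperedKernelProd {k : ℕ} (g₀ : ℝ → ℝ) (lam : ℝ) (p : ℝ × ℝ)
    (x : Fin k → ℝ) : ℝ :=
  ∏ i, temperedKernel g₀ lam p.1 (x i) * temperedKernel g₀ lam p.2 (x i)

section temperedKernel

variable {k : ℕ} {g₀ : ℝ → ℝ} {a lam : ℝ}

theorem measurable_temperedKernel (hg₀ : Measurable g₀) (lam : ℝ) :
    Measurable fun p : ℝ × ℝ => temperedKernel g₀ lam p.1 p.2 :=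
  Measurable.ite (measurableSet_lt measurable_snd measurable_fst)
    ((hg₀.comp (measurable_fst.sub measurable_snd)).mul
      ((measurable_fst.sub measurable_snd).const_mul (-lam)).exp)
    measurable_const

theorem abs_temperedKernel (g₀ : ℝ → ℝ) (lam u x : ℝ) :
    |temperedKernel g₀ lam u x| = temperedKernel (fun y => |g₀ y|) lam u x := by
  unfold temperedKernel
  split_ifs <;> simp [abs_mul, abs_of_pos (exp_pos _)]

theorem temperedKernel_mul_eq_min_add_abs (g₀ : ℝ → ℝ) (lam u v x : ℝ) :
    temperedKernel g₀ lam u x * temperedKernel g₀ lam v x =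
      temperedKernel g₀ lam (min u v + |u - v|) x * temperedKernel g₀ lam (min u v) x := by
  rcases le_total u v with h | h
  · rw [min_eq_left h, abs_of_nonpos (sub_nonpos.2 h), neg_sub, add_sub_cancel, mul_comm]
  · rw [min_eq_right h, abs_of_nonneg (sub_nonneg.2 h), add_sub_cancel]

theorem temperedKernel_mul_comp_sub_mul (hhom : IsPosHomogeneous a g₀) {r : ℝ} (hr : 0 < r)
    (v y : ℝ) :
    temperedKernel g₀ lam (v + r) (v - r * y) * temperedKernel g₀ lam v (v - r * y) =
      (Ioi 0).indicator (fun y => r ^ (2 * a) * exp (-lam * r) *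
        (g₀ y * g₀ (1 + y) * exp (-2 * lam * r * y))) y := by
  unfold temperedKernel
  by_cases hy : 0 < y
  · have hry : 0 < r * y := mul_pos hr hy
    rw [indicator_of_mem (mem_Ioi.mpr hy), if_pos (by linarith), if_pos (by linarith),
      show v + r - (v - r * y) = r * (1 + y) by ring, show v - (v - r * y) = r * y by ring,
      hhom r hr _ (by linarith), hhom r hr y hy, two_mul, rpow_add hr]
    have hexp : exp (-lam * (r * (1 + y))) * exp (-lam * (r * y)) =
        exp (-lam * r) * exp (-2 * lam * r * y) := by
      rw [← exp_add, ← exp_add]; ring_nf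
    linear_combination (r ^ a * r ^ a * g₀ y * g₀ (1 + y)) * hexp
  · rw [indicator_of_notMem (by simpa using hy), if_neg (show ¬v - r * y < v by nlinarith),
      mul_zero]

theorem integrableOn_mul_exp_mul (hg₀ : Measurable g₀)
    (hint : IntegrableOn (fun y : ℝ => |g₀ y * g₀ (1 + y)|) (Ioi 0)) {c : ℝ} (hc : c ≤ 0) :
    IntegrableOn (fun y => g₀ y * g₀ (1 + y) * exp (c * y)) (Ioi 0) := by
  have hmeas : Measurable fun y => g₀ y * g₀ (1 + y) :=
    hg₀.mul (hg₀.comp (measurable_const.add measurable_id))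
  refine ((integrable_norm_iff hmeas.aestronglyMeasurable).1 hint).mul_bdd (c := 1) (by fun_prop)
    ((ae_restrict_iff' measurableSet_Ioi).2 (ae_of_all _ fun y (hy : 0 < y) => ?_))
  rw [norm_of_nonneg (exp_pos _).le, exp_le_one_iff]
  exact mul_nonpos_of_nonpos_of_nonneg hc hy.le

theorem integrable_temperedKernel_add_mul (hg₀ : Measurable g₀) (hhom : IsPosHomogeneous a g₀)
    (hint : IntegrableOn (fun y : ℝ => |g₀ y * g₀ (1 + y)|) (Ioi 0)) (hlam : 0 ≤ lam)
    {r : ℝ} (hr : 0 < r) (v : ℝ) :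
    Integrable fun x => temperedKernel g₀ lam (v + r) x * temperedKernel g₀ lam v x := by
  rw [← integrable_comp_sub_mul_iff _ hr.ne' v]
  simp_rw [temperedKernel_mul_comp_sub_mul hhom hr v]
  rw [integrable_indicator_iff measurableSet_Ioi]
  exact (integrableOn_mul_exp_mul hg₀ hint (by nlinarith)).const_mul _

theorem integral_temperedKernel_add_mul (hhom : IsPosHomogeneous a g₀) {r : ℝ} (hr : 0 < r)
    (v : ℝ) :
    ∫ x, temperedKernel g₀ lam (v + r) x * temperedKernel g₀ lam v x =
      exp (-lam * r) * r ^ (2 * a + 1) *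
        ∫ y in Ioi 0, g₀ y * g₀ (1 + y) * exp (-2 * lam * r * y) := by
  rw [integral_eq_smul_integral_comp_sub_mul _ hr v]
  simp_rw [temperedKernel_mul_comp_sub_mul hhom hr v]
  rw [integral_indicator measurableSet_Ioi, integral_const_mul, rpow_add hr, rpow_one,
    smul_eq_mul]
  ring

theorem integrable_temperedKernel_mul (hg₀ : Measurable g₀) (hhom : IsPosHomogeneous a g₀)
    (hint : IntegrableOn (fun y : ℝ => |g₀ y * g₀ (1 + y)|) (Ioi 0)) (hlam : 0 ≤ lam)
    {u v : ℝ} (huv : u ≠ v) :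
    Integrable fun x => temperedKernel g₀ lam u x * temperedKernel g₀ lam v x := by
  simp_rw [temperedKernel_mul_eq_min_add_abs g₀ lam u v]
  exact integrable_temperedKernel_add_mul hg₀ hhom hint hlam (abs_sub_pos.2 huv) _

theorem integral_temperedKernel_mul (hhom : IsPosHomogeneous a g₀) {u v : ℝ} (huv : u ≠ v) :
    ∫ x, temperedKernel g₀ lam u x * temperedKernel g₀ lam v x =
      exp (-lam * |u - v|) * |u - v| ^ (2 * a + 1) *
        ∫ y in Ioi 0, g₀ y * g₀ (1 + y) * exp (-2 * lam * |u - v| * y) := by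
  simp_rw [temperedKernel_mul_eq_min_add_abs g₀ lam u v]
  exact integral_temperedKernel_add_mul hhom (abs_sub_pos.2 huv) _

theorem integral_abs_temperedKernel_mul_le (hhom : IsPosHomogeneous a g₀)
    (hint : IntegrableOn (fun y : ℝ => |g₀ y * g₀ (1 + y)|) (Ioi 0)) (hlam : 0 ≤ lam)
    {u v : ℝ} (huv : u ≠ v) :
    ∫ x, |temperedKernel g₀ lam u x * temperedKernel g₀ lam v x| ≤
      |u - v| ^ (2 * a + 1) * ∫ y in Ioi 0, |g₀ y * g₀ (1 + y)| := by
  have habs : (fun x => |temperedKernel g₀ lam u x * temperedKernel g₀ lam v x|) = fun x =>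
      temperedKernel (fun y => |g₀ y|) lam u x * temperedKernel (fun y => |g₀ y|) lam v x := by
    simp_rw [abs_mul, abs_temperedKernel]
  rw [habs, integral_temperedKernel_mul hhom.abs huv]
  have hr : 0 < |u - v| := abs_sub_pos.2 huv
  have hJ : ∫ y in Ioi 0, |g₀ y| * |g₀ (1 + y)| * exp (-2 * lam * |u - v| * y) ≤
      ∫ y in Ioi 0, |g₀ y * g₀ (1 + y)| := by
    refine integral_mono_of_nonneg (ae_of_all _ fun y => by positivity) hint
      ((ae_restrict_iff' measurableSet_Ioi).2 (ae_of_all _ fun y (hy : 0 < y) => ?_))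
    show |g₀ y| * |g₀ (1 + y)| * _ ≤ _
    rw [← abs_mul]
    exact mul_le_of_le_one_right (abs_nonneg _)
      (exp_le_one_iff.2 (by nlinarith [mul_nonneg (mul_nonneg hlam hr.le) hy.le]))
  calc exp (-lam * |u - v|) * |u - v| ^ (2 * a + 1) *
        ∫ y in Ioi 0, |g₀ y| * |g₀ (1 + y)| * exp (-2 * lam * |u - v| * y)
      ≤ 1 * |u - v| ^ (2 * a + 1) * ∫ y in Ioi 0, |g₀ y * g₀ (1 + y)| := by
        gcongr
        exact exp_le_one_iff.2 (by nlinarith)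
    _ = |u - v| ^ (2 * a + 1) * ∫ y in Ioi 0, |g₀ y * g₀ (1 + y)| := by ring

theorem integral_temperedKernelProd (hhom : IsPosHomogeneous a g₀) {p : ℝ × ℝ}
    (hp : p.1 ≠ p.2) :
    ∫ x : Fin k → ℝ, temperedKernelProd g₀ lam p x =
      exp (-lam * k * |p.1 - p.2|) * |p.1 - p.2| ^ ((k : ℝ) * (2 * a + 1)) *
        (∫ y in Ioi 0, g₀ y * g₀ (1 + y) * exp (-2 * lam * |p.1 - p.2| * y)) ^ k := by
  unfold temperedKernelProd
  rw [integral_fintype_prod_volume_eq_pow (fun w =>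
      temperedKernel g₀ lam p.1 w * temperedKernel g₀ lam p.2 w), Fintype.card_fin,
    integral_temperedKernel_mul hhom hp, mul_pow, mul_pow, ← exp_nat_mul, ← rpow_natCast,
    ← rpow_mul (abs_nonneg _)]
  ring_nf

theorem integral_norm_temperedKernelProd_le (hhom : IsPosHomogeneous a g₀)
    (hint : IntegrableOn (fun y : ℝ => |g₀ y * g₀ (1 + y)|) (Ioi 0)) (hlam : 0 ≤ lam)
    {p : ℝ × ℝ} (hp : p.1 ≠ p.2) :
    ∫ x : Fin k → ℝ, ‖temperedKernelProd g₀ lam p x‖ ≤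
      |p.1 - p.2| ^ ((k : ℝ) * (2 * a + 1)) * (∫ y in Ioi 0, |g₀ y * g₀ (1 + y)|) ^ k := by
  simp_rw [temperedKernelProd, norm_prod, norm_eq_abs]
  rw [integral_fintype_prod_volume_eq_pow (fun w => |temperedKernel g₀ lam p.1 w *
      temperedKernel g₀ lam p.2 w|), Fintype.card_fin, mul_comm (k : ℝ),
    rpow_mul (abs_nonneg _), rpow_natCast, ← mul_pow]
  exact pow_le_pow_left₀ (integral_nonneg fun _ => abs_nonneg _)
    (integral_abs_temperedKernel_mul_le hhom hint hlam hp) k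

theorem measurable_temperedKernelProd (hg₀ : Measurable g₀) (lam : ℝ) :
    Measurable (Function.uncurry (temperedKernelProd (k := k) g₀ lam)) := by
  have hK := measurable_temperedKernel hg₀ lam
  unfold temperedKernelProd Function.uncurry
  exact Finset.measurable_prod _ fun i _ =>
    (hK.comp (measurable_fst.fst.prodMk ((measurable_pi_apply i).comp measurable_snd))).mul
      (hK.comp (measurable_fst.snd.prodMk ((measurable_pi_apply i).comp measurable_snd)))

theorem integrable_temperedKernelProd (hβ : -1 < (k : ℝ) * (2 * a + 1)) (hg₀ : Measurable g₀)
    (hhom : IsPosHomogeneous a g₀)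
    (hint : IntegrableOn (fun y : ℝ => |g₀ y * g₀ (1 + y)|) (Ioi 0)) (hlam : 0 ≤ lam)
    (s t : ℝ) :
    Integrable (Function.uncurry (temperedKernelProd (k := k) g₀ lam))
      (((volume.restrict (Ioc 0 t)).prod (volume.restrict (Ioc 0 s))).prod volume) := by
  have hmeas := measurable_temperedKernelProd (k := k) hg₀ lam
  have hoff := ae_fst_ne_snd (volume.restrict (Ioc 0 t)) (volume.restrict (Ioc 0 s))
  rw [integrable_prod_iff hmeas.aestronglyMeasurable]
  refine ⟨hoff.mono fun p hp => Integrable.fintype_prod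
    (f := fun _ w => temperedKernel g₀ lam p.1 w * temperedKernel g₀ lam p.2 w)
    fun _ => integrable_temperedKernel_mul hg₀ hhom hint hlam hp, ?_⟩
  refine ((integrable_abs_sub_rpow_prod hβ s t).mul_const
    ((∫ y in Ioi 0, |g₀ y * g₀ (1 + y)|) ^ k)).mono'
    hmeas.norm.aestronglyMeasurable.integral_prod_right' (hoff.mono fun p hp => ?_)
  rw [norm_of_nonneg (integral_nonneg fun _ => norm_nonneg _)]
  exact integral_norm_temperedKernelProd_le hhom hint hlam hp

theorem tghProdKernel_eq_integral_prod_temperedKernel (g₀ : ℝ → ℝ) (lam t : ℝ)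
    (x : Fin k → ℝ) :
    tghProdKernel k g₀ lam t x = ∫ u in Ioc 0 t, ∏ i, temperedKernel g₀ lam u (x i) := by
  refine integral_congr_ae (ae_of_all _ fun u => ?_)
  by_cases h : ∀ i, x i < u
  · rw [indicator_of_mem (show u ∈ {u' | ∀ i, x i < u'} from h)]
    exact Finset.prod_congr rfl fun i _ => (if_pos (h i)).symm
  · rw [indicator_of_notMem (show u ∉ {u' | ∀ i, x i < u'} from h)]
    obtain ⟨i, hi⟩ := not_forall.mp h
    exact (Finset.prod_eq_zero (Finset.mem_univ i) (if_neg hi)).symm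

theorem tghProdKernel_mul_eq_integral_temperedKernelProd (g₀ : ℝ → ℝ) (lam s t : ℝ)
    (x : Fin k → ℝ) :
    tghProdKernel k g₀ lam t x * tghProdKernel k g₀ lam s x =
      ∫ p, temperedKernelProd g₀ lam p x
        ∂(volume.restrict (Ioc 0 t)).prod (volume.restrict (Ioc 0 s)) := by
  simp_rw [tghProdKernel_eq_integral_prod_temperedKernel, ← integral_prod_mul, temperedKernelProd,
    Finset.prod_mul_distrib]

end temperedKernel

theorem stmt6_general {k : ℕ} (hk : 1 ≤ k) (a : ℝ)
    (ha₁ : -1/2 - 1/(2*(k : ℝ)) < a)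
    (g₀ : ℝ → ℝ) (hg₀ : Measurable g₀)
    (hhom : ∀ c : ℝ, 0 < c → ∀ y : ℝ, 0 < y → g₀ (c * y) = c ^ a * g₀ y)
    (hint : IntegrableOn (fun y : ℝ => |g₀ y * g₀ (1 + y)|) (Set.Ioi (0 : ℝ)))
    (lam : ℝ) (hlam : 0 < lam) (s t : ℝ) :
    -- absolute convergence
    Integrable (fun x : Fin k → ℝ =>
      tghProdKernel k g₀ lam t x * tghProdKernel k g₀ lam s x) ∧
    -- the covariance identity
    (∫ x : Fin k → ℝ, tghProdKernel k g₀ lam t x * tghProdKernel k g₀ lam s x) =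
      ∫ u in Set.Ioc (0 : ℝ) t, ∫ v in Set.Ioc (0 : ℝ) s,
        Real.exp (-lam * (k : ℝ) * |u - v|) * |u - v| ^ ((k : ℝ) * (2 * a + 1)) *
          (∫ y in Set.Ioi (0 : ℝ),
            g₀ y * g₀ (1 + y) * Real.exp (-2 * lam * |u - v| * y)) ^ k := by
  have hβ : -1 < (k : ℝ) * (2 * a + 1) := by
    have hk₀ : (0 : ℝ) < k := by exact_mod_cast hk
    have h := mul_lt_mul_of_pos_left ha₁ (by positivity : (0 : ℝ) < 2 * k)
    rw [mul_sub, mul_one_div_cancel (by positivity)] at h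
    linarith
  have hF := integrable_temperedKernelProd hβ hg₀ hhom hint hlam.le s t
  have hslice := (ae_fst_ne_snd (volume.restrict (Ioc 0 t)) (volume.restrict (Ioc 0 s))).mono
    fun p hp => integral_temperedKernelProd (k := k) (lam := lam) hhom hp
  simp_rw [tghProdKernel_mul_eq_integral_temperedKernelProd]
  refine ⟨hF.swap.integral_prod_left, ?_⟩
  rw [← integral_integral_swap hF, integral_congr_ae hslice]
  exact integral_prod _ (hF.integral_prod_left.congr hslice)

theorem stmt6 {k : ℕ} (hk : 1 ≤ k) (a : ℝ)
    (ha₁ : -1/2 - 1/(2*(k : ℝ)) < a) (ha₂ : a < -1/2)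
    (g₀ : ℝ → ℝ) (hg₀ : Measurable g₀)
    (hhom : ∀ c : ℝ, 0 < c → ∀ y : ℝ, 0 < y → g₀ (c * y) = c ^ a * g₀ y)
    (hint : IntegrableOn (fun y : ℝ => |g₀ y * g₀ (1 + y)|) (Set.Ioi (0 : ℝ)))
    (lam : ℝ) (hlam : 0 < lam) (s t : ℝ) (hs : 0 ≤ s) (ht : 0 ≤ t) :
    -- absolute convergence
    Integrable (fun x : Fin k → ℝ =>
      tghProdKernel k g₀ lam t x * tghProdKernel k g₀ lam s x) ∧
    -- the covariance identity
    (∫ x : Fin k → ℝ, tghProdKernel k g₀ lam t x * tghProdKernel k g₀ lam s x) =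
      ∫ u in Set.Ioc (0 : ℝ) t, ∫ v in Set.Ioc (0 : ℝ) s,
        Real.exp (-lam * (k : ℝ) * |u - v|) * |u - v| ^ ((k : ℝ) * (2 * a + 1)) *
          (∫ y in Set.Ioi (0 : ℝ),
            g₀ y * g₀ (1 + y) * Real.exp (-2 * lam * |u - v| * y)) ^ k :=
  stmt6_general hk a ha₁ g₀ hg₀ hhom hint lam hlam s t
end

section
/- Let k ≥ 1, α ∈ ℝ, β ≠ 0, and let g : (0,∞)^k → ℝ be measurable with g(c y) = c^α g(y) for all c > 0 and y ∈ (0,∞)^k. Then for every λ > 0, c > 0, t ∈ ℝ and x ∈ ℝ^k, h_{ct}^{λ,β}(c x) = c^{α+β+1} · h_t^{cλ,β}(x). -/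
open MeasureTheory Real Set

/-- The fractional filter `l_t^β(s) = ((t−s)₊^β − (−s)₊^β)/β`. -/
noncomputable def ell (t b s : ℝ) : ℝ :=
  ((max (t - s) 0) ^ b - (max (-s) 0) ^ b) / b

/-- The fractionally filtered tempered generalized Hermite kernel `h_t^{λ,β}`. -/
noncomputable def tghFiltKernel {k : ℕ} (g : (Fin k → ℝ) → ℝ) (lam b t : ℝ)
    (x : Fin k → ℝ) : ℝ :=
  ∫ s : ℝ, ell t b s *
    Set.indicator {s' : ℝ | ∀ i, x i < s'}
      (fun s' => g (fun i => s' - x i) * Real.exp (-lam * ∑ i, (s' - x i))) s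

lemma ell_scale (c t b u : ℝ) (hc : 0 < c) :
    ell (c * t) b (c * u) = c ^ b * ell t b u := by
  unfold ell
  have h1 : max (c * t - c * u) 0 = c * max (t - u) 0 := by
    rw [mul_max_of_nonneg _ _ hc.le, mul_zero, mul_sub]
  have h2 : max (-(c * u)) 0 = c * max (-u) 0 := by
    rw [mul_max_of_nonneg _ _ hc.le, mul_zero, mul_neg]
  rw [h1, h2, Real.mul_rpow hc.le (le_max_right _ _),
    Real.mul_rpow hc.le (le_max_right _ _)]
  ring

theorem stmt11 {k : ℕ} (hk : 1 ≤ k) (α : ℝ) (b : ℝ) (hb : b ≠ 0)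
    (g : (Fin k → ℝ) → ℝ) (hg : Measurable g)
    (hhom : ∀ c : ℝ, 0 < c → ∀ y : Fin k → ℝ, (∀ i, 0 < y i) →
      g (c • y) = c ^ α * g y)
    (lam c : ℝ) (hlam : 0 < lam) (hc : 0 < c) (t : ℝ) (x : Fin k → ℝ) :
    tghFiltKernel g lam b (c * t) (c • x) =
      c ^ (α + b + 1) * tghFiltKernel g (c * lam) b t x := by
  unfold tghFiltKernel
  set F : ℝ → ℝ := fun s => ell (c * t) b s *
    Set.indicator {s' : ℝ | ∀ i, (c • x) i < s'}
      (fun s' => g (fun i => s' - (c • x) i) * Real.exp (-lam * ∑ i, (s' - (c • x) i))) s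
    with hF
  have hcv : (∫ u : ℝ, F (c * u)) = |c⁻¹| • ∫ s : ℝ, F s :=
    MeasureTheory.Measure.integral_comp_mul_left F c
  have hci : |c⁻¹| = c⁻¹ := abs_of_pos (inv_pos.2 hc)
  have key : (∫ s : ℝ, F s) = c * ∫ u : ℝ, F (c * u) := by
    rw [hcv, hci, smul_eq_mul, ← mul_assoc, mul_inv_cancel₀ hc.ne', one_mul]
  rw [key]
  have hpt : ∀ u : ℝ, F (c * u) = (c ^ α * c ^ b) *
      (ell t b u * Set.indicator {s' : ℝ | ∀ i, x i < s'}
        (fun s' => g (fun i => s' - x i) * Real.exp (-(c * lam) * ∑ i, (s' - x i))) u) := by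
    intro u
    have hset : (∀ i, c * x i < c * u) ↔ (∀ i, x i < u) :=
      forall_congr' fun i => mul_lt_mul_iff_right₀ hc
    rw [hF]
    simp only [Set.indicator_apply, Set.mem_setOf_eq, Pi.smul_apply, smul_eq_mul]
    by_cases h : ∀ i, x i < u
    · rw [if_pos (hset.2 h), if_pos h, ell_scale c t b u hc]
      have hgv : g (fun i => c * u - c * x i) = c ^ α * g (fun i => u - x i) := by
        have hfun : (fun i => c * u - c * x i) = c • (fun i => u - x i) := by
          funext i; simp [smul_eq_mul, mul_sub]
        rw [hfun, hhom c hc (fun i => u - x i) (fun i => sub_pos.2 (h i))]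
      have hsum : -lam * ∑ i, (c * u - c * x i) = -(c * lam) * ∑ i, (u - x i) := by
        have : ∑ i, (c * u - c * x i) = c * ∑ i, (u - x i) := by
          rw [Finset.mul_sum]; congr 1; ext i; ring
        rw [this]; ring
      rw [hgv, hsum]; ring
    · rw [if_neg (fun hh => h (hset.1 hh)), if_neg h]; ring
  calc c * ∫ u : ℝ, F (c * u)
      = c * ∫ u : ℝ, (c ^ α * c ^ b) *
        (ell t b u * Set.indicator {s' : ℝ | ∀ i, x i < s'}
          (fun s' => g (fun i => s' - x i) * Real.exp (-(c * lam) * ∑ i, (s' - x i))) u) := by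
        congr 1; exact integral_congr_ae (Filter.Eventually.of_forall hpt)
    _ = c ^ (α + b + 1) * ∫ u : ℝ, ell t b u * Set.indicator {s' : ℝ | ∀ i, x i < s'}
          (fun s' => g (fun i => s' - x i) * Real.exp (-(c * lam) * ∑ i, (s' - x i))) u := by
        rw [integral_const_mul, Real.rpow_add hc, Real.rpow_add hc, Real.rpow_one]; ring
end

section
/- Let τ ∈ (0, 1/2), λ > 0, and u, v ∈ ℝ with u ≠ v. Then ∫_ℝ e^{−λ(u−x)_+} e^{−λ(v−x)_+} (u−x)_+^{τ−1} (v−x)_+^{τ−1} dx = (|u−v|/2)^{2τ−1} · ∫_1^∞ (w² − 1)^{τ−1} e^{−λ|u−v| w} dw, and both integrals converge absolutely. -/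
open MeasureTheory Real Set

private lemma aux_main (τ : ℝ) (hτ₁ : 0 < τ) (hτ₂ : τ < 1/2)
    (lam : ℝ) (hlam : 0 < lam) (u v : ℝ) (hlt : u < v) :
    Integrable (fun x : ℝ =>
      Real.exp (-lam * max (u - x) 0) * Real.exp (-lam * max (v - x) 0) *
        (max (u - x) 0) ^ (τ - 1) * (max (v - x) 0) ^ (τ - 1)) ∧
    IntegrableOn (fun w : ℝ => (w ^ 2 - 1) ^ (τ - 1) * Real.exp (-lam * |u - v| * w))
      (Set.Ioi (1 : ℝ)) ∧
    (∫ x : ℝ, Real.exp (-lam * max (u - x) 0) * Real.exp (-lam * max (v - x) 0) *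
        (max (u - x) 0) ^ (τ - 1) * (max (v - x) 0) ^ (τ - 1)) =
      (|u - v| / 2) ^ (2 * τ - 1) *
        ∫ w in Set.Ioi (1 : ℝ), (w ^ 2 - 1) ^ (τ - 1) * Real.exp (-lam * |u - v| * w) := by
  have hd0 : (0:ℝ) < v - u := sub_pos.2 hlt
  have habs : |u - v| = v - u := by rw [abs_sub_comm]; exact abs_of_pos hd0
  rw [habs]
  set d : ℝ := v - u with hdd
  have hd : 0 < d := hd0
  have hτ1 : τ - 1 ≠ 0 := by norm_num; linarith
  set H : ℝ → ℝ := fun t => Real.exp (-lam * t) * Real.exp (-lam * (t + d)) *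
      t ^ (τ - 1) * (t + d) ^ (τ - 1) with hH
  set G : ℝ → ℝ := fun w => (w ^ 2 - 1) ^ (τ - 1) * Real.exp (-lam * d * w) with hG
  -- continuity of H on (0, ∞)
  have hcont : ContinuousOn H (Ioi 0) := by
    apply ContinuousOn.mul
    apply ContinuousOn.mul
    apply ContinuousOn.mul
    · exact (Real.continuous_exp.comp (continuous_const.mul continuous_id)).continuousOn
    · exact (Real.continuous_exp.comp
        (continuous_const.mul (continuous_id.add continuous_const))).continuousOn
    · exact continuousOn_id.rpow_const (fun t ht => Or.inl (ne_of_gt ht))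
    · exact ((continuous_id.add continuous_const).continuousOn).rpow_const
        (fun t ht => Or.inl (ne_of_gt (by have := mem_Ioi.1 ht; dsimp; linarith)))
  -- integrability of H on (0, ∞)
  have hHint : IntegrableOn H (Ioi 0) := by
    have h1 : IntegrableOn H (Ioc 0 1) := by
      apply Integrable.mono' (g := fun t => d ^ (τ-1) * t ^ (τ-1))
      · exact ((intervalIntegral.intervalIntegrable_rpow' (by linarith)).1).const_mul _
      · exact (hcont.mono Ioc_subset_Ioi_self).aestronglyMeasurable measurableSet_Ioc
      · filter_upwards [ae_restrict_mem measurableSet_Ioc] with t ht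
        have ht0 : 0 < t := ht.1
        rw [Real.norm_eq_abs, abs_of_nonneg (by positivity)]
        have b1 : Real.exp (-lam * t) ≤ 1 := Real.exp_le_one_iff.2 (by nlinarith)
        have b2 : Real.exp (-lam * (t + d)) ≤ 1 := Real.exp_le_one_iff.2 (by nlinarith)
        have b3 : (t + d) ^ (τ - 1) ≤ d ^ (τ - 1) :=
          Real.rpow_le_rpow_of_nonpos hd (by linarith) (by linarith)
        have s1 : Real.exp (-lam * t) * Real.exp (-lam * (t + d)) ≤ 1 := by
          calc Real.exp (-lam * t) * Real.exp (-lam * (t + d)) ≤ 1 * 1 :=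
                mul_le_mul b1 b2 (Real.exp_pos _).le zero_le_one
            _ = 1 := mul_one 1
        have s2 : t ^ (τ - 1) * (t + d) ^ (τ - 1) ≤ t ^ (τ - 1) * d ^ (τ - 1) :=
          mul_le_mul_of_nonneg_left b3 (Real.rpow_nonneg ht0.le _)
        calc Real.exp (-lam * t) * Real.exp (-lam * (t + d)) *
              t ^ (τ - 1) * (t + d) ^ (τ - 1)
            = (Real.exp (-lam * t) * Real.exp (-lam * (t + d))) *
              (t ^ (τ - 1) * (t + d) ^ (τ - 1)) := by ring
          _ ≤ 1 * (t ^ (τ - 1) * d ^ (τ - 1)) :=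
              mul_le_mul s1 s2 (by positivity) zero_le_one
          _ = d ^ (τ-1) * t ^ (τ-1) := by ring
    have h2 : IntegrableOn H (Ioi 1) := by
      apply Integrable.mono' (g := fun t => Real.exp (-lam * t))
      · exact exp_neg_integrableOn_Ioi 1 hlam
      · exact (hcont.mono (Ioi_subset_Ioi zero_le_one)).aestronglyMeasurable measurableSet_Ioi
      · filter_upwards [ae_restrict_mem measurableSet_Ioi] with t ht
        have ht1 : 1 < t := ht
        have ht0 : 0 < t := by linarith
        rw [Real.norm_eq_abs, abs_of_nonneg (by positivity)]
        have b2 : Real.exp (-lam * (t + d)) ≤ 1 := Real.exp_le_one_iff.2 (by nlinarith)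
        have b3 : t ^ (τ - 1) ≤ 1 :=
          Real.rpow_le_one_of_one_le_of_nonpos (by linarith) (by linarith)
        have b4 : (t + d) ^ (τ - 1) ≤ 1 :=
          Real.rpow_le_one_of_one_le_of_nonpos (by linarith) (by linarith)
        have s1 : Real.exp (-lam * (t + d)) * t ^ (τ - 1) * (t + d) ^ (τ - 1) ≤ 1 := by
          calc Real.exp (-lam * (t + d)) * t ^ (τ - 1) * (t + d) ^ (τ - 1)
              ≤ 1 * 1 * 1 :=
                mul_le_mul (mul_le_mul b2 b3 (Real.rpow_nonneg ht0.le _) zero_le_one) b4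
                  (Real.rpow_nonneg (by linarith) _) (by norm_num)
            _ = 1 := by norm_num
        calc Real.exp (-lam * t) * Real.exp (-lam * (t + d)) *
              t ^ (τ - 1) * (t + d) ^ (τ - 1)
            = Real.exp (-lam * t) *
              (Real.exp (-lam * (t + d)) * t ^ (τ - 1) * (t + d) ^ (τ - 1)) := by ring
          _ ≤ Real.exp (-lam * t) * 1 := mul_le_mul_of_nonneg_left s1 (Real.exp_pos _).le
          _ = Real.exp (-lam * t) := mul_one _
    have hunion : Ioc (0:ℝ) 1 ∪ Ioi 1 = Ioi 0 := Ioc_union_Ioi_eq_Ioi zero_le_one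
    exact hunion ▸ h1.union h2
  -- the integrand over ℝ in terms of H
  have hF : (fun x : ℝ =>
      Real.exp (-lam * max (u - x) 0) * Real.exp (-lam * max (v - x) 0) *
        (max (u - x) 0) ^ (τ - 1) * (max (v - x) 0) ^ (τ - 1))
      = fun x : ℝ => (Ioi (0:ℝ)).indicator H (u - x) := by
    funext x
    by_cases hx : 0 < u - x
    · have h1 : max (u - x) 0 = u - x := max_eq_left hx.le
      have h2 : max (v - x) 0 = v - x := max_eq_left (by linarith)
      have h3 : v - x = u - x + d := by rw [hdd]; ring
      rw [indicator_of_mem (mem_Ioi.2 hx), h1, h2, h3, hH]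
    · push_neg at hx
      have h1 : max (u - x) 0 = 0 := max_eq_right hx
      rw [indicator_of_notMem (by simpa using hx), h1, Real.zero_rpow hτ1]
      ring
  have hc : (0:ℝ) < d/2 := by positivity
  have hc2 : (0:ℝ) < 2/d := by positivity
  -- key pointwise identity between indicators
  have hpt : ∀ t : ℝ, (Ioi (0:ℝ)).indicator H t
      = (d/2) ^ (2*τ-2) * (Ioi (1:ℝ)).indicator G (2/d * t + 1) := by
    intro t
    by_cases ht : 0 < t
    · have hw : (1:ℝ) < 2/d * t + 1 := by nlinarith
      rw [indicator_of_mem (mem_Ioi.2 ht), indicator_of_mem (mem_Ioi.2 hw), hH, hG]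
      have htd : 0 < t + d := by linarith
      have hsq : (2/d * t + 1)^2 - 1 = (2/d * t) * (2/d * (t+d)) := by
        field_simp
        ring
      have hr1 : ((2/d * t) * (2/d * (t+d))) ^ (τ-1)
          = (2/d * t) ^ (τ-1) * (2/d * (t+d)) ^ (τ-1) :=
        Real.mul_rpow (by positivity) (by positivity)
      have hr2 : (2/d * t) ^ (τ-1) = (2/d) ^ (τ-1) * t ^ (τ-1) :=
        Real.mul_rpow (by positivity) ht.le
      have hr3 : (2/d * (t+d)) ^ (τ-1) = (2/d) ^ (τ-1) * (t+d) ^ (τ-1) :=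
        Real.mul_rpow (by positivity) htd.le
      have hexp : Real.exp (-lam * d * (2/d * t + 1))
          = Real.exp (-lam * t) * Real.exp (-lam * (t + d)) := by
        rw [← Real.exp_add]
        congr 1
        field_simp
        ring
      have hconst : (d/2:ℝ) ^ (2*τ-2) * ((2/d) ^ (τ-1) * (2/d) ^ (τ-1)) = 1 := by
        have hinv : (d/2:ℝ) = (2/d)⁻¹ := by field_simp
        rw [hinv, ← Real.rpow_add hc2, Real.inv_rpow hc2.le, ← Real.rpow_neg hc2.le,
          ← Real.rpow_add hc2]
        rw [show -(2*τ - 2) + (τ - 1 + (τ - 1)) = 0 by ring, Real.rpow_zero]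
      simp only [hsq, hr1, hr2, hr3, hexp]
      linear_combination (-(t ^ (τ-1) * (t+d) ^ (τ-1) * Real.exp (-lam * t) *
        Real.exp (-lam * (t + d)))) * hconst
    · push_neg at ht
      have hw : ¬ (1:ℝ) < 2/d * t + 1 := by nlinarith
      rw [indicator_of_notMem (by simpa using ht), indicator_of_notMem (by simpa using hw),
        mul_zero]
  have hHind : Integrable ((Ioi (0:ℝ)).indicator H) :=
    (integrable_indicator_iff measurableSet_Ioi).2 hHint
  -- first conjunct
  have int1 : Integrable (fun x : ℝ =>
      Real.exp (-lam * max (u - x) 0) * Real.exp (-lam * max (v - x) 0) *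
        (max (u - x) 0) ^ (τ - 1) * (max (v - x) 0) ^ (τ - 1)) := by
    rw [hF]
    exact (integrable_comp_sub_left ((Ioi (0:ℝ)).indicator H) u).2 hHind
  -- transfer integrability to G
  have hcne : ((d/2:ℝ) ^ (2*τ-2)) ≠ 0 := (Real.rpow_pos_of_pos hc _).ne'
  have haff : (fun t : ℝ => (Ioi (1:ℝ)).indicator G (2/d * t + 1))
      = fun t : ℝ => ((d/2:ℝ) ^ (2*τ-2))⁻¹ * (Ioi (0:ℝ)).indicator H t := by
    funext t
    rw [hpt t, inv_mul_cancel_left₀ hcne]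
  have hint_aff : Integrable (fun t : ℝ => (Ioi (1:ℝ)).indicator G (2/d * t + 1)) := by
    rw [haff]; exact hHind.const_mul _
  have hψ : Integrable (fun s : ℝ => (Ioi (1:ℝ)).indicator G (s + 1)) :=
    (integrable_comp_mul_left_iff (fun s : ℝ => (Ioi (1:ℝ)).indicator G (s + 1))
      (ne_of_gt hc2)).1 hint_aff
  have hGind : Integrable ((Ioi (1:ℝ)).indicator G) := by
    have := hψ.comp_add_right (-1)
    simpa using this
  have int2 : IntegrableOn G (Ioi 1) := (integrable_indicator_iff measurableSet_Ioi).1 hGind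
  refine ⟨int1, int2, ?_⟩
  -- the integral identity
  rw [hF]
  have e0 : (∫ x : ℝ, (Ioi (0:ℝ)).indicator H (u - x))
      = ∫ x : ℝ, (Ioi (0:ℝ)).indicator H (u + x) := by
    have := integral_neg_eq_self (fun x : ℝ => (Ioi (0:ℝ)).indicator H (u + x)) volume
    simp only [← sub_eq_add_neg] at this
    exact this
  have e1 : (∫ x : ℝ, (Ioi (0:ℝ)).indicator H (u + x))
      = ∫ t : ℝ, (Ioi (0:ℝ)).indicator H t :=
    integral_add_left_eq_self ((Ioi (0:ℝ)).indicator H) u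
  rw [e0, e1]
  have e2 : (∫ t : ℝ, (Ioi (0:ℝ)).indicator H t)
      = (d/2) ^ (2*τ-2) * ∫ t : ℝ, (Ioi (1:ℝ)).indicator G (2/d * t + 1) := by
    rw [← integral_const_mul]
    exact integral_congr_ae (Filter.Eventually.of_forall hpt)
  rw [e2]
  have e3 : (∫ t : ℝ, (Ioi (1:ℝ)).indicator G (2/d * t + 1))
      = |(2/d:ℝ)⁻¹| • ∫ s : ℝ, (Ioi (1:ℝ)).indicator G (s + 1) :=
    Measure.integral_comp_mul_left (fun s : ℝ => (Ioi (1:ℝ)).indicator G (s + 1)) (2/d)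
  have e4 : (∫ s : ℝ, (Ioi (1:ℝ)).indicator G (s + 1))
      = ∫ s : ℝ, (Ioi (1:ℝ)).indicator G s :=
    integral_add_right_eq_self ((Ioi (1:ℝ)).indicator G) 1
  rw [e3, e4, integral_indicator measurableSet_Ioi]
  have habs2 : |(2/d:ℝ)⁻¹| = d/2 := by
    rw [abs_of_pos (by positivity)]
    field_simp
  rw [habs2, smul_eq_mul, ← mul_assoc, ← Real.rpow_add_one hc.ne' (2*τ-2),
    show 2*τ - 2 + 1 = 2*τ - 1 by ring]

theorem stmt12 (τ : ℝ) (hτ₁ : 0 < τ) (hτ₂ : τ < 1/2)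
    (lam : ℝ) (hlam : 0 < lam) (u v : ℝ) (huv : u ≠ v) :
    -- absolute convergence of both integrals
    Integrable (fun x : ℝ =>
      Real.exp (-lam * max (u - x) 0) * Real.exp (-lam * max (v - x) 0) *
        (max (u - x) 0) ^ (τ - 1) * (max (v - x) 0) ^ (τ - 1)) ∧
    IntegrableOn (fun w : ℝ => (w ^ 2 - 1) ^ (τ - 1) * Real.exp (-lam * |u - v| * w))
      (Set.Ioi (1 : ℝ)) ∧
    -- the identity
    (∫ x : ℝ, Real.exp (-lam * max (u - x) 0) * Real.exp (-lam * max (v - x) 0) *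
        (max (u - x) 0) ^ (τ - 1) * (max (v - x) 0) ^ (τ - 1)) =
      (|u - v| / 2) ^ (2 * τ - 1) *
        ∫ w in Set.Ioi (1 : ℝ), (w ^ 2 - 1) ^ (τ - 1) * Real.exp (-lam * |u - v| * w) := by
  rcases lt_or_gt_of_ne huv with h | h
  · exact aux_main τ hτ₁ hτ₂ lam hlam u v h
  · obtain ⟨h1, h2, h3⟩ := aux_main τ hτ₁ hτ₂ lam hlam v u h
    have habs : |u - v| = |v - u| := abs_sub_comm u v
    have hfun : ∀ x : ℝ,
        Real.exp (-lam * max (v - x) 0) * Real.exp (-lam * max (u - x) 0) *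
          (max (v - x) 0) ^ (τ - 1) * (max (u - x) 0) ^ (τ - 1)
        = Real.exp (-lam * max (u - x) 0) * Real.exp (-lam * max (v - x) 0) *
          (max (u - x) 0) ^ (τ - 1) * (max (v - x) 0) ^ (τ - 1) := fun x => by ring
    refine ⟨h1.congr (Filter.Eventually.of_forall hfun), by rw [habs]; exact h2, ?_⟩
    rw [habs, ← h3]
    exact integral_congr_ae (Filter.Eventually.of_forall fun x => (hfun x).symm)
end
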